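/- (Conspicuous Subset Sufficient Condition.) Suppose X and Y are not independent. Then a sufficient condition for (X,Y) to be IB_β-learnable is β > inf over subsets Ω_x ⊂ 𝒳 of β₀(Ω_x), where β₀(Ω_x) = (1/p(Ω_x) − 1) / E_{y∼p(y|Ω_x)}[ p(y|Ω_x)/p(y) − 1 ], the infimum being over measurable Ω_x with 0 < p(Ω_x) < 1 and p(y|Ω_x) not identically p(y). Moreover (inf over Ω_x of β₀(Ω_x))⁻¹ is a lower bound on the slope at the origin of the Pareto frontier of I(Y;Z) versus I(X;Z). -/

import Mathlib

open Filter Asymptotics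
open scoped BigOperators Topology

/-- A joint probability distribution `p(x,y)` on finite types `X` and `Y`. -/
structure JointDist (X Y : Type) [Fintype X] [Fintype Y] where
  p : X → Y → ℝ
  nonneg : ∀ x y, 0 ≤ p x y
  sum_one : ∑ x, ∑ y, p x y = 1

variable {X Y Z : Type} [Fintype X] [Fintype Y] [Fintype Z]

/-- The marginal distribution `p(x)` of `X`. -/
def JointDist.pX (P : JointDist X Y) (x : X) : ℝ := ∑ y, P.p x y

/-- The marginal distribution `p(y)` of `Y`. -/
def JointDist.pY (P : JointDist X Y) (y : Y) : ℝ := ∑ x, P.p x y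

/-- An encoder: a conditional distribution `p(z|x)` specifying a representation `Z` of `X`;
together with `p(x,y)` it determines the Markov chain `Z ← X ↔ Y`. -/
structure Encoder (X Z : Type) [Fintype X] [Fintype Z] where
  c : X → Z → ℝ
  nonneg : ∀ x z, 0 ≤ c x z
  sum_one : ∀ x, ∑ z, c x z = 1

/-- The mutual information `I(X;Z)` of the representation given by encoder `e`,
where `p(x,z) = p(x) p(z|x)` and `p(z) = ∑ x, p(x) p(z|x)`. -/
noncomputable def IXZ (P : JointDist X Y) (e : Encoder X Z) : ℝ :=
  ∑ x, ∑ z, P.pX x * e.c x z *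
    Real.log (P.pX x * e.c x z / (P.pX x * ∑ x', P.pX x' * e.c x' z))

/-- The mutual information `I(Y;Z)`, using the Markov chain `Z ← X ↔ Y`,
i.e. `p(y,z) = ∑ x, p(x,y) p(z|x)`. -/
noncomputable def IYZ (P : JointDist X Y) (e : Encoder X Z) : ℝ :=
  ∑ y, ∑ z, (∑ x, P.p x y * e.c x z) *
    Real.log ((∑ x, P.p x y * e.c x z) / (P.pY y * ∑ x, P.pX x * e.c x z))

/-- The Information Bottleneck objective `IB_β(X,Y;Z) = I(X;Z) − β·I(Y;Z)`. -/
noncomputable def IB (P : JointDist X Y) (β : ℝ) (e : Encoder X Z) : ℝ :=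
  IXZ P e - β * IYZ P e

/-- `(X,Y)` is `IB_β`-learnable if some representation `Z` (given by some encoder `p₁(z|x)`)
achieves `IB_β(X,Y;Z) < 0`, where `0` is the value attained by the trivial representation
`p(z|x) = p(z)`. -/
def IBLearnable (P : JointDist X Y) (β : ℝ) : Prop :=
  ∃ (n : ℕ) (e : Encoder X (Fin n)), IB P β e < 0

/-- `p(Ω_x)`: the probability of the event `X ∈ Ω_x`. -/
noncomputable def pOmega (P : JointDist X Y) (Ω : Finset X) : ℝ := ∑ x ∈ Ω, P.pX x

/-- `p(y|Ω_x)`: the conditional distribution of `Y` given `X ∈ Ω_x`. -/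
noncomputable def pYOmega (P : JointDist X Y) (Ω : Finset X) (y : Y) : ℝ :=
  (∑ x ∈ Ω, P.p x y) / pOmega P Ω

/-- `β₀(Ω_x) = (1/p(Ω_x) − 1) / E_{y∼p(y|Ω_x)}[ p(y|Ω_x)/p(y) − 1 ]`. -/
noncomputable def beta0Sub (P : JointDist X Y) (Ω : Finset X) : ℝ :=
  (1 / pOmega P Ω - 1) / ∑ y, pYOmega P Ω y * (pYOmega P Ω y / P.pY y - 1)

/-- The slope at the origin of the Pareto frontier of `I(Y;Z)` versus `I(X;Z)`: following the
paper's identification (Section "Learnability and the Information Plane"), it is the supremum of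
the achievable ratios `I(Y;Z)/I(X;Z)` over all representations `Z` of `X`. -/
noncomputable def paretoSlopeOrigin (P : JointDist X Y) : ℝ :=
  sSup {r : ℝ | ∃ (n : ℕ) (e : Encoder X (Fin n)), 0 < IXZ P e ∧ r = IYZ P e / IXZ P e}


section Helpers


noncomputable def klb (a b : ℝ) : ℝ :=
  a * Real.log a - a * Real.log b + (1-a) * Real.log (1-a) - (1-a) * Real.log (1-b)

lemma klb_self (b : ℝ) : klb b b = 0 := by unfold klb; ring

lemma log_ge_one_sub_inv {x : ℝ} (hx : 0 < x) : 1 - x⁻¹ ≤ Real.log x := by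
  have h := Real.log_le_sub_one_of_pos (inv_pos.mpr hx)
  rw [Real.log_inv] at h
  linarith

lemma logdiff_lower {ε u v : ℝ} (hε0 : 0 < ε) (hε : ε ≤ 1/8)
    (hu : 1/2 ≤ u) (huv : u ≤ v) (hv : v ≤ 1/2 + ε) :
    2*(2-2*ε)*(v-u) ≤ (Real.log v - Real.log (1-v)) - (Real.log u - Real.log (1-u)) := by
  have hu0 : (0:ℝ) < u := by linarith
  have hv0 : (0:ℝ) < v := by linarith
  have hv1 : v < 1 := by linarith
  have h1u : (0:ℝ) < 1 - u := by linarith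
  have h1v : (0:ℝ) < 1 - v := by linarith
  have h1 : 1 - (v/u)⁻¹ ≤ Real.log (v/u) := log_ge_one_sub_inv (by positivity)
  have h2 : 1 - ((1-u)/(1-v))⁻¹ ≤ Real.log ((1-u)/(1-v)) := log_ge_one_sub_inv (by positivity)
  rw [Real.log_div (ne_of_gt hv0) (ne_of_gt hu0)] at h1
  rw [Real.log_div (ne_of_gt h1u) (ne_of_gt h1v)] at h2
  have e1 : (v/u)⁻¹ = u/v := by field_simp
  have e2 : ((1-u)/(1-v))⁻¹ = (1-v)/(1-u) := by field_simp
  rw [e1] at h1; rw [e2] at h2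
  have k1 : 1 - u/v = (v-u)/v := by field_simp
  have k2 : 1 - (1-v)/(1-u) = (v-u)/(1-u) := by field_simp; ring
  rw [k1] at h1; rw [k2] at h2
  have b1 : (2-4*ε)*(v-u) ≤ (v-u)/v := by
    rw [le_div_iff₀ hv0]; nlinarith [mul_nonneg (sub_nonneg.mpr huv) hε0.le]
  have b2 : 2*(v-u) ≤ (v-u)/(1-u) := by
    rw [le_div_iff₀ h1u]; nlinarith [mul_nonneg (sub_nonneg.mpr huv) (by linarith : (0:ℝ) ≤ 1/2 - u + 1/2)]
  nlinarith [h1, h2, b1, b2]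

lemma logdiff_upper {ε u v : ℝ} (hε0 : 0 < ε) (hε : ε ≤ 1/8)
    (hu : 1/2 ≤ u) (huv : u ≤ v) (hv : v ≤ 1/2 + ε) :
    (Real.log v - Real.log (1-v)) - (Real.log u - Real.log (1-u)) ≤ 2*(2+4*ε)*(v-u) := by
  have hu0 : (0:ℝ) < u := by linarith
  have hv0 : (0:ℝ) < v := by linarith
  have h1u : (0:ℝ) < 1 - u := by linarith
  have h1v : (0:ℝ) < 1 - v := by linarith
  have h1 : Real.log (v/u) ≤ v/u - 1 := Real.log_le_sub_one_of_pos (by positivity)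
  have h2 : Real.log ((1-u)/(1-v)) ≤ (1-u)/(1-v) - 1 := Real.log_le_sub_one_of_pos (by positivity)
  rw [Real.log_div (ne_of_gt hv0) (ne_of_gt hu0)] at h1
  rw [Real.log_div (ne_of_gt h1u) (ne_of_gt h1v)] at h2
  have k1 : v/u - 1 = (v-u)/u := by field_simp
  have k2 : (1-u)/(1-v) - 1 = (v-u)/(1-v) := by field_simp; ring
  rw [k1] at h1; rw [k2] at h2
  have b1 : (v-u)/u ≤ 2*(v-u) := by
    rw [div_le_iff₀ hu0]; nlinarith
  have b2 : (v-u)/(1-v) ≤ (2+8*ε)*(v-u) := by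
    rw [div_le_iff₀ h1v]
    have h3 : (0:ℝ) ≤ (2+8*ε)*(1-v) - 1 := by nlinarith
    nlinarith [mul_nonneg (sub_nonneg.mpr huv) h3]
  nlinarith [h1, h2, b1, b2]

lemma klb_hasDerivAt (b K t : ℝ) (ht0 : 0 < t) (ht1 : t < 1) :
    HasDerivAt (fun s => klb s b - K * (s - b)^2)
      ((Real.log t - Real.log (1-t)) - (Real.log b - Real.log (1-b)) - K * (2*(t-b))) t := by
  have h1 : HasDerivAt (fun s : ℝ => s * Real.log s) (Real.log t + 1) t :=
    Real.hasDerivAt_mul_log (ne_of_gt ht0)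
  have hin : HasDerivAt (fun s : ℝ => 1 - s) (-1) t := by
    simpa using (hasDerivAt_id t).const_sub 1
  have h2 : HasDerivAt (fun s : ℝ => (1-s) * Real.log (1-s)) ((Real.log (1-t) + 1) * (-1)) t := by
    exact (Real.hasDerivAt_mul_log (by linarith : (1:ℝ) - t ≠ 0)).comp t hin
  have h3 : HasDerivAt (fun s : ℝ => s * Real.log b) (Real.log b) t := by
    simpa using (hasDerivAt_id t).mul_const (Real.log b)
  have h4 : HasDerivAt (fun s : ℝ => (1-s) * Real.log (1-b)) ((-1) * Real.log (1-b)) t := by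
    simpa using hin.mul_const (Real.log (1-b))
  have h5 : HasDerivAt (fun s : ℝ => K * (s - b)^2) (K * (2*(t-b))) t := by
    have : HasDerivAt (fun s : ℝ => (s - b)^2) (2*(t-b)) t := by
      simpa using ((hasDerivAt_id t).sub_const b).fun_pow 2
    simpa using this.const_mul K
  have := (((h1.sub h3).add h2).sub h4).sub h5
  exact this.congr_deriv (by ring)

lemma klb_ge {ε a b : ℝ} (hε0 : 0 < ε) (hε : ε ≤ 1/8)
    (ha : 1/2 ≤ a) (ha' : a ≤ 1/2 + ε) (hb : 1/2 ≤ b) (hb' : b ≤ 1/2 + ε)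
    (logdiff_lower : ∀ u v : ℝ, 1/2 ≤ u → u ≤ v → v ≤ 1/2 + ε →
      2*(2-2*ε)*(v-u) ≤ (Real.log v - Real.log (1-v)) - (Real.log u - Real.log (1-u))) :
    (2 - 2*ε) * (a - b)^2 ≤ klb a b := by
  set K := 2 - 2*ε with hK
  set f : ℝ → ℝ := fun s => klb s b - K * (s - b)^2 with hf
  have key : ∀ t ∈ Set.Icc (1/2 : ℝ) (1/2 + ε), HasDerivAt f
      ((Real.log t - Real.log (1-t)) - (Real.log b - Real.log (1-b)) - K * (2*(t-b))) t := by
    intro t ht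
    exact klb_hasDerivAt b K t (by linarith [ht.1]) (by linarith [ht.2])
  have hfb : f b = 0 := by simp [hf, klb]
  have goal : 0 ≤ f a := by
    rcases le_total b a with hab | hab
    · have mono : MonotoneOn f (Set.Icc b a) := by
        apply monotoneOn_of_deriv_nonneg (convex_Icc b a)
        · intro t ht
          exact ((key t ⟨by linarith [ht.1], by linarith [ht.2]⟩).continuousAt).continuousWithinAt
        · intro t ht
          rw [interior_Icc] at ht
          exact ((key t ⟨by linarith [ht.1], by linarith [ht.2]⟩).differentiableAt).differentiableWithinAt
        · intro t ht
          rw [interior_Icc] at ht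
          rw [(key t ⟨by linarith [ht.1], by linarith [ht.2]⟩).deriv]
          have := logdiff_lower b t hb (le_of_lt ht.1) (by linarith [ht.2])
          linarith
      have := mono (Set.left_mem_Icc.mpr hab) (Set.right_mem_Icc.mpr hab) hab
      linarith [hfb ▸ this]
    · have anti : AntitoneOn f (Set.Icc a b) := by
        apply antitoneOn_of_deriv_nonpos (convex_Icc a b)
        · intro t ht
          exact ((key t ⟨by linarith [ht.1], by linarith [ht.2]⟩).continuousAt).continuousWithinAt
        · intro t ht
          rw [interior_Icc] at ht
          exact ((key t ⟨by linarith [ht.1], by linarith [ht.2]⟩).differentiableAt).differentiableWithinAt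
        · intro t ht
          rw [interior_Icc] at ht
          rw [(key t ⟨by linarith [ht.1], by linarith [ht.2]⟩).deriv]
          have := logdiff_lower t b (by linarith [ht.1]) (le_of_lt ht.2) hb'
          linarith
      have := anti (Set.left_mem_Icc.mpr hab) (Set.right_mem_Icc.mpr hab) hab
      linarith [hfb ▸ this]
  simpa [hf] using goal

lemma klb_le {ε a b : ℝ} (hε0 : 0 < ε) (hε : ε ≤ 1/8)
    (ha : 1/2 ≤ a) (ha' : a ≤ 1/2 + ε) (hb : 1/2 ≤ b) (hb' : b ≤ 1/2 + ε)
    (logdiff_upper : ∀ u v : ℝ, 1/2 ≤ u → u ≤ v → v ≤ 1/2 + ε →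
      (Real.log v - Real.log (1-v)) - (Real.log u - Real.log (1-u)) ≤ 2*(2+4*ε)*(v-u)) :
    klb a b ≤ (2 + 4*ε) * (a - b)^2 := by
  set K := 2 + 4*ε with hK
  set f : ℝ → ℝ := fun s => klb s b - K * (s - b)^2 with hf
  have key : ∀ t ∈ Set.Icc (1/2 : ℝ) (1/2 + ε), HasDerivAt f
      ((Real.log t - Real.log (1-t)) - (Real.log b - Real.log (1-b)) - K * (2*(t-b))) t := by
    intro t ht
    exact klb_hasDerivAt b K t (by linarith [ht.1]) (by linarith [ht.2])
  have hfb : f b = 0 := by simp [hf, klb]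
  have goal : f a ≤ 0 := by
    rcases le_total b a with hab | hab
    · have anti : AntitoneOn f (Set.Icc b a) := by
        apply antitoneOn_of_deriv_nonpos (convex_Icc b a)
        · intro t ht
          exact ((key t ⟨by linarith [ht.1], by linarith [ht.2]⟩).continuousAt).continuousWithinAt
        · intro t ht
          rw [interior_Icc] at ht
          exact ((key t ⟨by linarith [ht.1], by linarith [ht.2]⟩).differentiableAt).differentiableWithinAt
        · intro t ht
          rw [interior_Icc] at ht
          rw [(key t ⟨by linarith [ht.1], by linarith [ht.2]⟩).deriv]
          have := logdiff_upper b t hb (le_of_lt ht.1) (by linarith [ht.2])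
          linarith
      have := anti (Set.left_mem_Icc.mpr hab) (Set.right_mem_Icc.mpr hab) hab
      linarith [hfb ▸ this]
    · have mono : MonotoneOn f (Set.Icc a b) := by
        apply monotoneOn_of_deriv_nonneg (convex_Icc a b)
        · intro t ht
          exact ((key t ⟨by linarith [ht.1], by linarith [ht.2]⟩).continuousAt).continuousWithinAt
        · intro t ht
          rw [interior_Icc] at ht
          exact ((key t ⟨by linarith [ht.1], by linarith [ht.2]⟩).differentiableAt).differentiableWithinAt
        · intro t ht
          rw [interior_Icc] at ht
          rw [(key t ⟨by linarith [ht.1], by linarith [ht.2]⟩).deriv]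
          have := logdiff_upper t b (by linarith [ht.1]) (le_of_lt ht.2) hb'
          linarith
      have := mono (Set.left_mem_Icc.mpr hab) (Set.right_mem_Icc.mpr hab) hab
      linarith [hfb ▸ this]
  simpa [hf] using goal

section Basic

variable {X Y : Type} [Fintype X] [Fintype Y]

lemma pX_nonneg (P : JointDist X Y) (x : X) : 0 ≤ P.pX x :=
  Finset.sum_nonneg fun y _ => P.nonneg x y

lemma pY_nonneg (P : JointDist X Y) (y : Y) : 0 ≤ P.pY y :=
  Finset.sum_nonneg fun x _ => P.nonneg x y

lemma sum_pX (P : JointDist X Y) : ∑ x, P.pX x = 1 := P.sum_one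

lemma sum_pY (P : JointDist X Y) : ∑ y, P.pY y = 1 := by
  rw [← P.sum_one]; exact Finset.sum_comm

lemma p_le_pY (P : JointDist X Y) (x : X) (y : Y) : P.p x y ≤ P.pY y :=
  Finset.single_le_sum (fun x' _ => P.nonneg x' y) (Finset.mem_univ x)

lemma p_le_pX (P : JointDist X Y) (x : X) (y : Y) : P.p x y ≤ P.pX x :=
  Finset.single_le_sum (fun y' _ => P.nonneg x y') (Finset.mem_univ y)

open scoped Classical in
noncomputable def chiI (Ω : Finset X) (x : X) : ℝ := if x ∈ Ω then 1 else 0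

lemma chiI_nonneg (Ω : Finset X) (x : X) : 0 ≤ chiI Ω x := by
  classical by_cases h : x ∈ Ω <;> simp [chiI, h]

lemma chiI_le_one (Ω : Finset X) (x : X) : chiI Ω x ≤ 1 := by
  classical by_cases h : x ∈ Ω <;> simp [chiI, h]

lemma chiI_sq (Ω : Finset X) (x : X) : chiI Ω x ^ 2 = chiI Ω x := by
  classical by_cases h : x ∈ Ω <;> simp [chiI, h]

open scoped Classical in
lemma sum_mul_chiI (Ω : Finset X) (f : X → ℝ) :
    ∑ x, f x * chiI Ω x = ∑ x ∈ Ω, f x := by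
  classical
  rw [show ∑ x, f x * chiI Ω x = ∑ x, if x ∈ Ω then f x else 0 by
    apply Finset.sum_congr rfl; intro x _
    by_cases h : x ∈ Ω <;> simp [chiI, h]]
  rw [Finset.sum_ite_mem, Finset.univ_inter]

end Basic

section Cons

variable {X Y : Type} [Fintype X] [Fintype Y]

lemma cons_bounds (P : JointDist X Y) (hY : ∀ y, 0 < P.pY y) (Ω : Finset X)
    (h0 : 0 < pOmega P Ω) (h1 : pOmega P Ω < 1) {ε : ℝ} (hε0 : 0 < ε) (hε : ε ≤ 1/8) :
    ∃ e : Encoder X (Fin 2),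
      IXZ P e ≤ (2+4*ε) * (ε^2 * (pOmega P Ω * (1 - pOmega P Ω))) ∧
      (2-2*ε) * (ε^2 * (pOmega P Ω * (1 - pOmega P Ω))) ≤ IXZ P e ∧
      (2-2*ε) * (ε^2 * ∑ y, ((∑ x ∈ Ω, P.p x y) - pOmega P Ω * P.pY y)^2 / P.pY y) ≤ IYZ P e := by
  classical
  have hLl : ∀ u v : ℝ, 1/2 ≤ u → u ≤ v → v ≤ 1/2 + ε →
      2*(2-2*ε)*(v-u) ≤ (Real.log v - Real.log (1-v)) - (Real.log u - Real.log (1-u)) :=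
    fun u v hu huv hv => logdiff_lower hε0 hε hu huv hv
  have hLu : ∀ u v : ℝ, 1/2 ≤ u → u ≤ v → v ≤ 1/2 + ε →
      (Real.log v - Real.log (1-v)) - (Real.log u - Real.log (1-u)) ≤ 2*(2+4*ε)*(v-u) :=
    fun u v hu huv hv => logdiff_upper hε0 hε hu huv hv
  set pΩ := pOmega P Ω with hpΩ
  clear_value pΩ
  set b : ℝ := 1/2 + ε * pΩ with hbdef
  clear_value b
  set a : X → ℝ := fun x => 1/2 + ε * chiI Ω x with hadef
  clear_value a
  have ha : ∀ x, 1/2 ≤ a x ∧ a x ≤ 1/2 + ε := by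
    intro x
    have h1 := chiI_nonneg Ω x
    have h2 := chiI_le_one Ω x
    constructor <;> simp only [hadef] <;> nlinarith
  have hbb : 1/2 ≤ b ∧ b ≤ 1/2 + ε := by
    constructor <;> simp only [hbdef] <;> nlinarith
  set ec : X → Fin 2 → ℝ := fun x z => if z = 1 then a x else 1 - a x with hecdef
  have hecnn : ∀ x z, 0 ≤ ec x z := by
    intro x z
    obtain ⟨hx1, hx2⟩ := ha x
    simp only [hecdef]
    split <;> linarith
  have hecsum : ∀ x, ∑ z : Fin 2, ec x z = 1 := by
    intro x
    rw [Fin.sum_univ_two]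
    simp only [hecdef]
    norm_num
  set e : Encoder X (Fin 2) := ⟨ec, hecnn, hecsum⟩ with hedef
  have hecc : e.c = ec := rfl
  have hec0 : ∀ x, e.c x 0 = 1 - a x := by
    intro x; rw [hecc]; simp only [hecdef]; norm_num
  have hec1 : ∀ x, e.c x 1 = a x := by
    intro x; rw [hecc]; simp only [hecdef]; norm_num
  clear_value e
  -- marginal of Z
  have hchi : ∑ x, P.pX x * chiI Ω x = pΩ := by
    rw [sum_mul_chiI, hpΩ]; rfl
  have hpz1 : ∑ x', P.pX x' * e.c x' 1 = b := by
    have step : ∀ x', P.pX x' * e.c x' 1 = P.pX x' * (1/2) + ε * (P.pX x' * chiI Ω x') := by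
      intro x'; rw [hec1]; simp only [hadef]; ring
    rw [Finset.sum_congr rfl (fun x _ => step x), Finset.sum_add_distrib,
        ← Finset.sum_mul, ← Finset.mul_sum, hchi, sum_pX, hbdef]
    ring
  have hpz0 : ∑ x', P.pX x' * e.c x' 0 = 1 - b := by
    have : ∑ x', P.pX x' * e.c x' 0 = ∑ x', (P.pX x' - P.pX x' * e.c x' 1) := by
      apply Finset.sum_congr rfl
      intro x _
      rw [hec0, hec1]; ring
    rw [this, Finset.sum_sub_distrib, sum_pX, hpz1]
  -- IXZ as sum of Bernoulli KL divergences
  have hsum_x : ∀ x : X,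
      (∑ z : Fin 2, P.pX x * e.c x z *
        Real.log (P.pX x * e.c x z / (P.pX x * ∑ x', P.pX x' * e.c x' z)))
      = P.pX x * klb (a x) b := by
    intro x
    rw [Fin.sum_univ_two, hpz0, hpz1, hec0, hec1]
    rcases eq_or_lt_of_le (pX_nonneg P x) with h | h
    · rw [← h]; norm_num
    · obtain ⟨hax1, hax2⟩ := ha x
      obtain ⟨hb1, hb2⟩ := hbb
      rw [mul_div_mul_left (1 - a x) (1 - b) (ne_of_gt h),
          mul_div_mul_left (a x) b (ne_of_gt h)]
      rw [Real.log_div (ne_of_gt (by linarith : (0:ℝ) < 1 - a x))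
            (ne_of_gt (by linarith : (0:ℝ) < 1 - b)),
          Real.log_div (ne_of_gt (by linarith : (0:ℝ) < a x))
            (ne_of_gt (by linarith : (0:ℝ) < b))]
      unfold klb
      ring
  have hIXZ : IXZ P e = ∑ x, P.pX x * klb (a x) b := by
    unfold IXZ
    exact Finset.sum_congr rfl (fun x _ => hsum_x x)
  -- quadratic sums
  have hsq : ∑ x, P.pX x * (a x - b)^2 = ε^2 * (pΩ * (1 - pΩ)) := by
    have step : ∀ x, P.pX x * (a x - b)^2
        = (ε^2*(1-2*pΩ)) * (P.pX x * chiI Ω x) + (ε^2*pΩ^2) * P.pX x := by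
      intro x
      have hs := chiI_sq Ω x
      simp only [hadef, hbdef]
      linear_combination (ε^2 * P.pX x) * hs
    rw [Finset.sum_congr rfl (fun x _ => step x), Finset.sum_add_distrib,
        ← Finset.mul_sum, ← Finset.mul_sum, hchi, sum_pX]
    ring
  have hIXZ_le : IXZ P e ≤ (2+4*ε) * (ε^2 * (pΩ * (1 - pΩ))) := by
    rw [hIXZ, ← hsq]
    rw [Finset.mul_sum]
    apply Finset.sum_le_sum
    intro x _
    rw [show (2+4*ε) * (P.pX x * (a x - b)^2) = P.pX x * ((2+4*ε) * (a x - b)^2) by ring]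
    exact mul_le_mul_of_nonneg_left
      (klb_le hε0 hε (ha x).1 (ha x).2 hbb.1 hbb.2 hLu) (pX_nonneg P x)
  have hIXZ_ge : (2-2*ε) * (ε^2 * (pΩ * (1 - pΩ))) ≤ IXZ P e := by
    rw [hIXZ, ← hsq, Finset.mul_sum]
    apply Finset.sum_le_sum
    intro x _
    rw [show (2-2*ε) * (P.pX x * (a x - b)^2) = P.pX x * ((2-2*ε) * (a x - b)^2) by ring]
    exact mul_le_mul_of_nonneg_left
      (klb_ge hε0 hε (ha x).1 (ha x).2 hbb.1 hbb.2 hLl) (pX_nonneg P x)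
  -- IYZ
  set w : Y → ℝ := fun y => ∑ x ∈ Ω, P.p x y with hwdef
  clear_value w
  set ay : Y → ℝ := fun y => 1/2 + ε * (w y / P.pY y) with haydef
  clear_value ay
  have hw0 : ∀ y, 0 ≤ w y := by
    intro y; rw [hwdef]
    exact Finset.sum_nonneg (fun x _ => P.nonneg x y)
  have hwle : ∀ y, w y ≤ P.pY y := by
    intro y
    rw [hwdef]
    apply Finset.sum_le_sum_of_subset_of_nonneg (Finset.subset_univ Ω)
    intro x _ _
    exact P.nonneg x y
  have hay : ∀ y, 1/2 ≤ ay y ∧ ay y ≤ 1/2 + ε := by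
    intro y
    have h1 : 0 ≤ w y / P.pY y := div_nonneg (hw0 y) (pY_nonneg P y)
    have h2 : w y / P.pY y ≤ 1 := (div_le_one (hY y)).mpr (hwle y)
    constructor <;> simp only [haydef] <;> nlinarith
  have hwchi : ∀ y, ∑ x, P.p x y * chiI Ω x = w y := by
    intro y; rw [sum_mul_chiI, hwdef]
  have hq1 : ∀ y, ∑ x, P.p x y * e.c x 1 = P.pY y * ay y := by
    intro y
    have step : ∀ x, P.p x y * e.c x 1 = P.p x y * (1/2) + ε * (P.p x y * chiI Ω x) := by
      intro x; rw [hec1]; simp only [hadef]; ring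
    rw [Finset.sum_congr rfl (fun x _ => step x), Finset.sum_add_distrib,
        ← Finset.sum_mul, ← Finset.mul_sum, hwchi y]
    rw [show (∑ x, P.p x y) = P.pY y from rfl]
    simp only [haydef]
    have hpy : P.pY y ≠ 0 := (hY y).ne'
    field_simp
  have hq0 : ∀ y, ∑ x, P.p x y * e.c x 0 = P.pY y * (1 - ay y) := by
    intro y
    have : ∑ x, P.p x y * e.c x 0 = ∑ x, (P.p x y - P.p x y * e.c x 1) := by
      apply Finset.sum_congr rfl
      intro x _
      rw [hec0, hec1]; ring
    rw [this, Finset.sum_sub_distrib, hq1]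
    rw [show (∑ x, P.p x y) = P.pY y from rfl]
    ring
  have hsum_y : ∀ y : Y,
      (∑ z : Fin 2, (∑ x, P.p x y * e.c x z) *
        Real.log ((∑ x, P.p x y * e.c x z) / (P.pY y * ∑ x, P.pX x * e.c x z)))
      = P.pY y * klb (ay y) b := by
    intro y
    rw [Fin.sum_univ_two, hq0, hq1, hpz0, hpz1]
    have hpy := hY y
    obtain ⟨hay1, hay2⟩ := hay y
    obtain ⟨hb1, hb2⟩ := hbb
    rw [mul_div_mul_left (1 - ay y) (1 - b) (ne_of_gt hpy),
        mul_div_mul_left (ay y) b (ne_of_gt hpy)]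
    rw [Real.log_div (ne_of_gt (by linarith : (0:ℝ) < 1 - ay y))
          (ne_of_gt (by linarith : (0:ℝ) < 1 - b)),
        Real.log_div (ne_of_gt (by linarith : (0:ℝ) < ay y))
          (ne_of_gt (by linarith : (0:ℝ) < b))]
    unfold klb
    ring
  have hIYZ : IYZ P e = ∑ y, P.pY y * klb (ay y) b := by
    unfold IYZ
    exact Finset.sum_congr rfl (fun y _ => hsum_y y)
  have hsqy : ∑ y, P.pY y * (ay y - b)^2 = ε^2 * ∑ y, (w y - pΩ * P.pY y)^2 / P.pY y := by
    rw [Finset.mul_sum]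
    apply Finset.sum_congr rfl
    intro y _
    have hpy := hY y
    simp only [haydef, hbdef]
    field_simp
    ring
  have hIYZ_ge : (2-2*ε) * (ε^2 * ∑ y, (w y - pΩ * P.pY y)^2 / P.pY y) ≤ IYZ P e := by
    rw [hIYZ, ← hsqy, Finset.mul_sum]
    apply Finset.sum_le_sum
    intro y _
    rw [show (2-2*ε) * (P.pY y * (ay y - b)^2) = P.pY y * ((2-2*ε) * (ay y - b)^2) by ring]
    exact mul_le_mul_of_nonneg_left
      (klb_ge hε0 hε (hay y).1 (hay y).2 hbb.1 hbb.2 hLl) (pY_nonneg P y)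
  simp only [hwdef] at hIYZ_ge
  exact ⟨e, hIXZ_le, hIXZ_ge, hIYZ_ge⟩

end Cons

section DPI

variable {X Y Z : Type} [Fintype X] [Fintype Y] [Fintype Z]

lemma dpi (P : JointDist X Y) (hY : ∀ y, 0 < P.pY y) (e : Encoder X Z) :
    IYZ P e ≤ IXZ P e := by
  classical
  have hIXZ : ∑ x, ∑ y, ∑ z, P.p x y * e.c x z *
      Real.log (P.pX x * e.c x z / (P.pX x * ∑ x', P.pX x' * e.c x' z)) = IXZ P e := by
    unfold IXZ
    apply Finset.sum_congr rfl; intro x _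
    rw [Finset.sum_comm]
    apply Finset.sum_congr rfl; intro z _
    rw [← Finset.sum_mul, ← Finset.sum_mul]
    rfl
  have hIYZ : ∑ x, ∑ y, ∑ z, P.p x y * e.c x z *
      Real.log ((∑ x', P.p x' y * e.c x' z) / (P.pY y * ∑ x', P.pX x' * e.c x' z)) = IYZ P e := by
    rw [Finset.sum_comm]
    unfold IYZ
    apply Finset.sum_congr rfl; intro y _
    rw [Finset.sum_comm]
    apply Finset.sum_congr rfl; intro z _
    rw [← Finset.sum_mul]
  have hA : ∑ x, ∑ y, ∑ z, P.p x y * e.c x z = 1 := by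
    rw [show (1:ℝ) = ∑ x, ∑ y, P.p x y from P.sum_one.symm]
    apply Finset.sum_congr rfl; intro x _
    apply Finset.sum_congr rfl; intro y _
    rw [← Finset.mul_sum, e.sum_one, mul_one]
  have hB : ∑ x, ∑ y, ∑ z,
      P.p x y * (∑ x', P.p x' y * e.c x' z) / P.pY y = 1 := by
    rw [Finset.sum_comm]
    rw [show (1:ℝ) = ∑ y, P.pY y from (sum_pY P).symm]
    apply Finset.sum_congr rfl; intro y _
    rw [Finset.sum_comm]
    have : ∀ z, ∑ x, P.p x y * (∑ x', P.p x' y * e.c x' z) / P.pY y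
        = ∑ x', P.p x' y * e.c x' z := by
      intro z
      rw [show (∑ x, P.p x y * (∑ x', P.p x' y * e.c x' z) / P.pY y)
          = (∑ x, P.p x y) * ((∑ x', P.p x' y * e.c x' z) / P.pY y) by
        rw [Finset.sum_mul]
        apply Finset.sum_congr rfl; intro x _
        ring]
      rw [show (∑ x, P.p x y) = P.pY y from rfl]
      rw [mul_comm, div_mul_cancel₀ _ (ne_of_gt (hY y))]
    rw [Finset.sum_congr rfl (fun z _ => this z)]
    rw [Finset.sum_comm]
    calc ∑ x', ∑ z, P.p x' y * e.c x' z = ∑ x', P.p x' y * ∑ z, e.c x' z := by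
          apply Finset.sum_congr rfl; intro x _; rw [Finset.mul_sum]
      _ = ∑ x', P.p x' y := by
          apply Finset.sum_congr rfl; intro x _; rw [e.sum_one, mul_one]
      _ = P.pY y := rfl
  have key : ∀ (x : X) (y : Y) (z : Z),
      P.p x y * e.c x z - P.p x y * (∑ x', P.p x' y * e.c x' z) / P.pY y ≤
      P.p x y * e.c x z *
        Real.log (P.pX x * e.c x z / (P.pX x * ∑ x', P.pX x' * e.c x' z)) -
      P.p x y * e.c x z *
        Real.log ((∑ x', P.p x' y * e.c x' z) / (P.pY y * ∑ x', P.pX x' * e.c x' z)) := by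
    intro x y z
    have hq0 : 0 ≤ ∑ x', P.p x' y * e.c x' z :=
      Finset.sum_nonneg fun i _ => mul_nonneg (P.nonneg i y) (e.nonneg i z)
    have hpY := hY y
    by_cases h : P.p x y * e.c x z = 0
    · rw [h]
      have : 0 ≤ P.p x y * (∑ x', P.p x' y * e.c x' z) / P.pY y :=
        div_nonneg (mul_nonneg (P.nonneg x y) hq0) (le_of_lt hpY)
      simp only [zero_mul, sub_zero, zero_sub]
      linarith
    · obtain ⟨hp', hc'⟩ := mul_ne_zero_iff.mp h
      have hp : 0 < P.p x y := lt_of_le_of_ne (P.nonneg x y) (Ne.symm hp')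
      have hc : 0 < e.c x z := lt_of_le_of_ne (e.nonneg x z) (Ne.symm hc')
      have hpX : 0 < P.pX x := lt_of_lt_of_le hp (p_le_pX P x y)
      have hpz : 0 < ∑ x', P.pX x' * e.c x' z :=
        lt_of_lt_of_le (mul_pos hpX hc)
          (Finset.single_le_sum (fun i _ => mul_nonneg (pX_nonneg P i) (e.nonneg i z))
            (Finset.mem_univ x))
      have hq : 0 < ∑ x', P.p x' y * e.c x' z :=
        lt_of_lt_of_le (mul_pos hp hc)
          (Finset.single_le_sum (fun i _ => mul_nonneg (P.nonneg i y) (e.nonneg i z))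
            (Finset.mem_univ x))
      set q := ∑ x', P.p x' y * e.c x' z with hqdef
      set pz := ∑ x', P.pX x' * e.c x' z with hpzdef
      clear_value q pz
      rw [mul_div_mul_left (e.c x z) pz (ne_of_gt hpX)]
      rw [Real.log_div (ne_of_gt hc) (ne_of_gt hpz),
          Real.log_div (ne_of_gt hq) (ne_of_gt (mul_pos hpY hpz)),
          Real.log_mul (ne_of_gt hpY) (ne_of_gt hpz)]
      have hlog : Real.log ((P.p x y * q / P.pY y) / (P.p x y * e.c x z)) ≤
          (P.p x y * q / P.pY y) / (P.p x y * e.c x z) - 1 :=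
        Real.log_le_sub_one_of_pos (by positivity)
      rw [Real.log_div (ne_of_gt (by positivity)) (ne_of_gt (mul_pos hp hc)),
          Real.log_div (ne_of_gt (mul_pos hp hq)) (ne_of_gt hpY),
          Real.log_mul (ne_of_gt hp) (ne_of_gt hq),
          Real.log_mul (ne_of_gt hp) (ne_of_gt hc)] at hlog
      have hmul := mul_le_mul_of_nonneg_left hlog (le_of_lt (mul_pos hp hc))
      have h2 : P.p x y * e.c x z *
          ((P.p x y * q / P.pY y) / (P.p x y * e.c x z) - 1)
          = P.p x y * q / P.pY y - P.p x y * e.c x z := by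
        field_simp
      rw [h2] at hmul
      linarith [hmul]
  have hsum : (0:ℝ) ≤ IXZ P e - IYZ P e := by
    rw [← hIXZ, ← hIYZ]
    have step := Finset.sum_le_sum (fun x (_ : x ∈ Finset.univ) =>
      Finset.sum_le_sum (fun y (_ : y ∈ Finset.univ) =>
        Finset.sum_le_sum (fun z (_ : z ∈ Finset.univ) => key x y z)))
    simp only [Finset.sum_sub_distrib] at step
    rw [hA, hB] at step
    linarith
  linarith

end DPI

section Aux

variable {X Y : Type} [Fintype X] [Fintype Y]

lemma chi_sums (P : JointDist X Y) (hY : ∀ y, 0 < P.pY y) (Ω : Finset X)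
    (h0 : 0 < pOmega P Ω) :
    ∑ y, ((∑ x ∈ Ω, P.p x y) - pOmega P Ω * P.pY y)^2 / P.pY y
      = pOmega P Ω^2 * ∑ y, pYOmega P Ω y * (pYOmega P Ω y / P.pY y - 1) := by
  have hpne : pOmega P Ω ≠ 0 := ne_of_gt h0
  have hw : ∑ y, ∑ x ∈ Ω, P.p x y = pOmega P Ω := by
    rw [Finset.sum_comm]; rfl
  have e1 : ∀ y : Y, ((∑ x ∈ Ω, P.p x y) - pOmega P Ω * P.pY y)^2 / P.pY y
      = (∑ x ∈ Ω, P.p x y)^2 / P.pY y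
        - (2*pOmega P Ω) * (∑ x ∈ Ω, P.p x y) + pOmega P Ω^2 * P.pY y := by
    intro y
    have hyne := (hY y).ne'
    field_simp
    ring
  have e2 : ∀ y : Y, pOmega P Ω^2 * (pYOmega P Ω y * (pYOmega P Ω y / P.pY y - 1))
      = (∑ x ∈ Ω, P.p x y)^2 / P.pY y - pOmega P Ω * (∑ x ∈ Ω, P.p x y) := by
    intro y
    unfold pYOmega
    have hyne := (hY y).ne'
    field_simp
  rw [Finset.sum_congr rfl (fun y _ => e1 y), Finset.mul_sum,
      Finset.sum_congr rfl (fun y _ => e2 y)]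
  simp only [Finset.sum_add_distrib, Finset.sum_sub_distrib, ← Finset.mul_sum]
  rw [hw, sum_pY]
  ring

lemma T_pos (P : JointDist X Y) (hY : ∀ y, 0 < P.pY y) (Ω : Finset X)
    (h0 : 0 < pOmega P Ω) (hne : ¬ ∀ y, pYOmega P Ω y = P.pY y) :
    0 < ∑ y, ((∑ x ∈ Ω, P.p x y) - pOmega P Ω * P.pY y)^2 / P.pY y := by
  push_neg at hne
  obtain ⟨y0, hy0⟩ := hne
  apply Finset.sum_pos' (fun y _ => div_nonneg (sq_nonneg _) (pY_nonneg P y))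
  refine ⟨y0, Finset.mem_univ _, ?_⟩
  apply div_pos _ (hY y0)
  have hnz : (∑ x ∈ Ω, P.p x y0) - pOmega P Ω * P.pY y0 ≠ 0 := by
    intro hc
    apply hy0
    unfold pYOmega
    rw [show (∑ x ∈ Ω, P.p x y0) = pOmega P Ω * P.pY y0 by linarith]
    rw [mul_comm, mul_div_assoc, div_self (ne_of_gt h0), mul_one]
  exact pow_two_pos_of_ne_zero hnz

lemma learnable_of_cond (P : JointDist X Y) (hY : ∀ y, 0 < P.pY y) (Ω : Finset X)
    (h0 : 0 < pOmega P Ω) (h1 : pOmega P Ω < 1)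
    (hne : ¬ ∀ y, pYOmega P Ω y = P.pY y) (β : ℝ) (hβ : beta0Sub P Ω < β) :
    IBLearnable P β := by
  obtain ⟨T, hTdef⟩ : ∃ t : ℝ, t = ∑ y, ((∑ x ∈ Ω, P.p x y) - pOmega P Ω * P.pY y)^2 / P.pY y :=
    ⟨_, rfl⟩
  obtain ⟨A', hAdef⟩ : ∃ t : ℝ, t = pOmega P Ω * (1 - pOmega P Ω) := ⟨_, rfl⟩
  obtain ⟨D, hDdef⟩ : ∃ t : ℝ, t = ∑ y, pYOmega P Ω y * (pYOmega P Ω y / P.pY y - 1) :=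
    ⟨_, rfl⟩
  have hTpos : 0 < T := by rw [hTdef]; exact T_pos P hY Ω h0 hne
  have hTD : T = pOmega P Ω^2 * D := by rw [hTdef, hDdef]; exact chi_sums P hY Ω h0
  have hDpos : 0 < D := by
    rcases lt_or_ge 0 D with h | h
    · exact h
    · exfalso
      nlinarith [mul_nonneg (sq_nonneg (pOmega P Ω)) (neg_nonneg.mpr h)]
  have hApos : 0 < A' := by rw [hAdef]; nlinarith
  have hβ' : (1/pOmega P Ω - 1)/D < β := by rw [hDdef]; exact hβ
  have hb0 : 0 < 1/pOmega P Ω - 1 := by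
    have : 1 < 1/pOmega P Ω := by rw [lt_div_iff₀ h0]; linarith
    linarith
  have hβpos : 0 < β := lt_trans (div_pos hb0 hDpos) hβ'
  have hAB : A' < β * T := by
    have h2 : 1/pOmega P Ω - 1 < β * D := (div_lt_iff₀ hDpos).mp hβ'
    have h3 : A' = pOmega P Ω^2 * (1/pOmega P Ω - 1) := by
      rw [hAdef]; field_simp
    have h4 := mul_lt_mul_of_pos_left h2 (pow_pos h0 2)
    rw [h3, hTD]; nlinarith
  set ε := min (1/8 : ℝ) ((β*T - A')/(2*A' + β*T + 1)) with hεdef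
  have hεnum : 0 < β*T - A' := by linarith
  have hden : 0 < 2*A' + β*T + 1 := by nlinarith
  have hε0 : 0 < ε := lt_min (by norm_num) (div_pos hεnum hden)
  have hε8 : ε ≤ 1/8 := min_le_left _ _
  have hkey : ε * (2*A' + β*T + 1) ≤ β*T - A' :=
    (le_div_iff₀ hden).mp (min_le_right _ _)
  obtain ⟨e, hXle, hXge, hYge⟩ := cons_bounds P hY Ω h0 h1 hε0 hε8
  rw [← hTdef] at hYge
  rw [← hAdef] at hXle
  refine ⟨2, e, ?_⟩
  unfold IB
  have h5 : β * ((2-2*ε)*(ε^2*T)) ≤ β * IYZ P e :=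
    mul_le_mul_of_nonneg_left hYge (le_of_lt hβpos)
  have hbracket : (2+4*ε)*A' - (2-2*ε)*(β*T) < 0 := by nlinarith
  have h8 : ε^2 * ((2+4*ε)*A' - (2-2*ε)*(β*T)) < 0 :=
    mul_neg_of_pos_of_neg (pow_pos hε0 2) hbracket
  nlinarith

lemma slope_part (P : JointDist X Y) (hY : ∀ y, 0 < P.pY y) (Ω : Finset X)
    (h0 : 0 < pOmega P Ω) (h1 : pOmega P Ω < 1)
    (hne : ¬ ∀ y, pYOmega P Ω y = P.pY y) :
    (beta0Sub P Ω)⁻¹ ≤ paretoSlopeOrigin P := by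
  obtain ⟨T, hTdef⟩ : ∃ t : ℝ, t = ∑ y, ((∑ x ∈ Ω, P.p x y) - pOmega P Ω * P.pY y)^2 / P.pY y :=
    ⟨_, rfl⟩
  obtain ⟨A', hAdef⟩ : ∃ t : ℝ, t = pOmega P Ω * (1 - pOmega P Ω) := ⟨_, rfl⟩
  obtain ⟨D, hDdef⟩ : ∃ t : ℝ, t = ∑ y, pYOmega P Ω y * (pYOmega P Ω y / P.pY y - 1) :=
    ⟨_, rfl⟩
  have hTpos : 0 < T := by rw [hTdef]; exact T_pos P hY Ω h0 hne
  have hTD : T = pOmega P Ω^2 * D := by rw [hTdef, hDdef]; exact chi_sums P hY Ω h0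
  have hDpos : 0 < D := by
    rcases lt_or_ge 0 D with h | h
    · exact h
    · exfalso
      nlinarith [mul_nonneg (sq_nonneg (pOmega P Ω)) (neg_nonneg.mpr h)]
  have hApos : 0 < A' := by rw [hAdef]; nlinarith
  have hb0 : 0 < 1/pOmega P Ω - 1 := by
    have : 1 < 1/pOmega P Ω := by rw [lt_div_iff₀ h0]; linarith
    linarith
  have hinv : (beta0Sub P Ω)⁻¹ = T / A' := by
    unfold beta0Sub
    rw [← hDdef, inv_div, hTD, hAdef]
    rw [div_eq_div_iff (by linarith) (by nlinarith)]
    field_simp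
  rw [hinv]
  have hBdd : BddAbove {r : ℝ | ∃ (n : ℕ) (e : Encoder X (Fin n)),
      0 < IXZ P e ∧ r = IYZ P e / IXZ P e} := by
    refine ⟨1, ?_⟩
    rintro r ⟨n, e, hpos, rfl⟩
    exact (div_le_one hpos).mpr (dpi P hY e)
  apply le_of_forall_pos_le_add
  intro δ hδ
  set ε := min (1/8 : ℝ) (δ*A'/(6*T)) with hεdef
  have hε0 : 0 < ε := lt_min (by norm_num) (div_pos (mul_pos hδ hApos) (by linarith))
  have hε8 : ε ≤ 1/8 := min_le_left _ _
  obtain ⟨e, hXle, hXge, hYge⟩ := cons_bounds P hY Ω h0 h1 hε0 hε8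
  rw [← hTdef] at hYge
  rw [← hAdef] at hXle hXge
  have hIXpos : 0 < IXZ P e :=
    lt_of_lt_of_le (mul_pos (by linarith) (mul_pos (pow_pos hε0 2) hApos)) hXge
  have hIY0 : 0 ≤ IYZ P e :=
    le_trans (le_of_lt (mul_pos (by linarith) (mul_pos (pow_pos hε0 2) hTpos))) hYge
  have hr : IYZ P e / IXZ P e ≤ paretoSlopeOrigin P :=
    le_csSup hBdd ⟨2, e, hIXpos, rfl⟩
  have hratio : ((2-2*ε)*(ε^2*T)) / ((2+4*ε)*(ε^2*A')) ≤ IYZ P e / IXZ P e :=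
    div_le_div₀ hIY0 hYge hIXpos hXle
  have hq : ((2-2*ε)*(ε^2*T)) / ((2+4*ε)*(ε^2*A')) = ((2-2*ε)*T) / ((2+4*ε)*A') := by
    rw [show (2-2*ε)*(ε^2*T) = ε^2*((2-2*ε)*T) by ring,
        show (2+4*ε)*(ε^2*A') = ε^2*((2+4*ε)*A') by ring,
        mul_div_mul_left _ _ (ne_of_gt (pow_pos hε0 2))]
  have hdiff : T/A' - ((2-2*ε)*T)/((2+4*ε)*A') = 6*ε*T/((2+4*ε)*A') := by
    rw [div_sub_div _ _ (ne_of_gt hApos) (by positivity : ((2+4*ε)*A') ≠ 0)]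
    rw [div_eq_div_iff (by positivity) (by positivity)]
    ring
  have hbound : 6*ε*T/((2+4*ε)*A') ≤ δ := by
    rw [div_le_iff₀ (by positivity)]
    have hεle : ε ≤ δ*A'/(6*T) := min_le_right _ _
    have h6 : ε * (6*T) ≤ δ*A' := (le_div_iff₀ (by linarith)).mp hεle
    nlinarith [mul_nonneg (mul_nonneg hδ.le hε0.le) hApos.le]
  linarith [hr, hratio, hq ▸ hratio, hdiff, hbound]

lemma nonempty_Omega (P : JointDist X Y)
    (hdep : ¬ ∀ x y, P.p x y = P.pX x * P.pY y) :
    ∃ Ω : Finset X, 0 < pOmega P Ω ∧ pOmega P Ω < 1 ∧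
      (¬ ∀ y, pYOmega P Ω y = P.pY y) := by
  classical
  push_neg at hdep
  obtain ⟨x0, y0, hxy⟩ := hdep
  have hpx : 0 < P.pX x0 := by
    rcases eq_or_lt_of_le (pX_nonneg P x0) with h | h
    · exfalso
      apply hxy
      have hp0 : P.p x0 y0 = 0 := by
        have h1 := p_le_pX P x0 y0
        have h2 := P.nonneg x0 y0
        linarith
      rw [hp0, ← h]
      ring
    · exact h
  have hΩ : pOmega P {x0} = P.pX x0 := by
    unfold pOmega; rw [Finset.sum_singleton]
  have hlt1 : P.pX x0 < 1 := by
    rcases lt_or_ge (P.pX x0) 1 with h | hge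
    · exact h
    have hx1 : P.pX x0 = 1 := le_antisymm (by
        rw [← sum_pX P]
        exact Finset.single_le_sum (fun i _ => pX_nonneg P i) (Finset.mem_univ x0)) hge
    exfalso
    have hall : ∀ x, x ≠ x0 → P.pX x = 0 := by
      intro x hx
      have hsum := sum_pX P
      have hsplit : P.pX x0 + ∑ x' ∈ Finset.univ.erase x0, P.pX x' = 1 := by
        rw [Finset.add_sum_erase _ _ (Finset.mem_univ x0)]
        exact hsum
      have h0' : ∑ x' ∈ Finset.univ.erase x0, P.pX x' = 0 := by
        rw [hx1] at hsplit; linarith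
      exact (Finset.sum_eq_zero_iff_of_nonneg (fun i _ => pX_nonneg P i)).mp h0' x
        (Finset.mem_erase.mpr ⟨hx, Finset.mem_univ x⟩)
    have hpy : P.pY y0 = P.p x0 y0 := by
      rw [show P.pY y0 = ∑ x, P.p x y0 from rfl,
          ← Finset.add_sum_erase _ _ (Finset.mem_univ x0)]
      have hz : ∑ x ∈ Finset.univ.erase x0, P.p x y0 = 0 := by
        apply Finset.sum_eq_zero
        intro x hx
        have hx0 := hall x (Finset.mem_erase.mp hx).1
        have h1 := p_le_pX P x y0
        have h2 := P.nonneg x y0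
        linarith
      rw [hz]; ring
    exact hxy (by rw [hx1, one_mul, hpy])
  refine ⟨{x0}, by rw [hΩ]; exact hpx, by rw [hΩ]; exact hlt1, ?_⟩
  intro hall
  apply hxy
  have hy := hall y0
  unfold pYOmega at hy
  rw [hΩ, Finset.sum_singleton] at hy
  rw [div_eq_iff (ne_of_gt hpx)] at hy
  rw [hy]; ring

end Aux

end Helpers

/-- (Conspicuous Subset Sufficient Condition.) Suppose `X` and `Y` are not
independent. Then a sufficient condition for `(X,Y)` to be `IB_β`-learnable is
`β > inf_{Ω_x ⊂ 𝒳} β₀(Ω_x)`, with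
`β₀(Ω_x) = (1/p(Ω_x) − 1) / E_{y∼p(y|Ω_x)}[p(y|Ω_x)/p(y) − 1]`, the infimum ranging over
subsets `Ω_x` with `0 < p(Ω_x) < 1` and `p(y|Ω_x)` not identically `p(y)`. Moreover
`(inf_{Ω_x} β₀(Ω_x))⁻¹` is a lower bound on the slope at the origin of the Pareto frontier of
`I(Y;Z)` versus `I(X;Z)`: `(β₀(Ω_x))⁻¹ ≤` the slope for every such `Ω_x`. -/
theorem IBLearnable_of_beta_gt_inf_beta0Sub (P : JointDist X Y)
    (hY : ∀ y, 0 < P.pY y)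
    (hdep : ¬ ∀ x y, P.p x y = P.pX x * P.pY y) :
    (∀ β : ℝ,
      sInf {r : ℝ | ∃ Ω : Finset X, 0 < pOmega P Ω ∧ pOmega P Ω < 1 ∧
          (¬ ∀ y, pYOmega P Ω y = P.pY y) ∧ r = beta0Sub P Ω} < β →
      IBLearnable P β) ∧
    ∀ Ω : Finset X, 0 < pOmega P Ω → pOmega P Ω < 1 →
      (¬ ∀ y, pYOmega P Ω y = P.pY y) →
      (beta0Sub P Ω)⁻¹ ≤ paretoSlopeOrigin P := by
  constructor
  · intro β hβ
    obtain ⟨Ω0, h00, h01, h0ne⟩ := nonempty_Omega P hdep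
    have hnonempty : {r : ℝ | ∃ Ω : Finset X, 0 < pOmega P Ω ∧ pOmega P Ω < 1 ∧
        (¬ ∀ y, pYOmega P Ω y = P.pY y) ∧ r = beta0Sub P Ω}.Nonempty :=
      ⟨beta0Sub P Ω0, Ω0, h00, h01, h0ne, rfl⟩
    obtain ⟨r, ⟨Ω, hΩ0, hΩ1, hΩne, rfl⟩, hrβ⟩ := exists_lt_of_csInf_lt hnonempty hβ
    exact learnable_of_cond P hY Ω hΩ0 hΩ1 hΩne β hrβ
  · intro Ω h0 h1 hne
    exact slope_part P hY Ω h0 h1 hne
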